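/- arXiv:1411.7109 — 2 statements merged into one kernel-verified Lean document; each statement's English description precedes it below -/
import Mathlib

section
/- For nonzero elements h, g of the ring A_R[a,b], the Newton polygon π_h(x) := log|h|_{exp(x)} = max_{n∈ℤ}(n·x + log|c_n|) satisfies π_{hg}(x) = π_h(x) + π_g(x) for all x in (log a, log b]. -/
/-!
At radius `r = exp x` the weights `‖c n‖ * r ^ n` of a series in `A_R[a,b]` tend to zero, so
the Gauss norm is attained, and there is a largest index where it is. If `i` and `j` are these
indices for `h` and `g`, then in the coefficient of `t ^ (i + j)` of `h * g` the term
`h i * g j` has strictly larger norm than every other term (for `u < i` the `g`-factor loses,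
for `u > i` the `h`-factor does). By the ultrametric inequality the coefficient then has exactly
the norm of that term, giving `|hg|_r ≥ |h|_r |g|_r`; the reverse inequality is immediate.
-/

open Filter Topology

noncomputable section

/-- The coefficient condition defining the ring `A_R[a,b]` of Laurent series. -/
def LOK {R : Type*} [NormedCommRing R] (a b : ℝ) (c : ℤ → R) : Prop :=
  ∀ r ∈ Set.Icc a b, Tendsto (fun n : ℤ => ‖c n‖ * r ^ n) (cocompact ℤ) (𝓝 0)

/-- The Gauss norm `|h|_r = max_n ‖c_n‖ r^n`. -/
def gaussNorm {R : Type*} [NormedCommRing R] (r : ℝ) (c : ℤ → R) : ℝ :=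
  ⨆ n : ℤ, ‖c n‖ * r ^ n

/-- Multiplication of Laurent series on coefficients. -/
def lmul {R : Type*} [NormedCommRing R] (c d : ℤ → R) : ℤ → R :=
  fun n => ∑' u : ℤ, c u * d (n - u)

/-- The Newton polygon `π_h(x) = log |h|_{exp x}`. -/
def newton {R : Type*} [NormedCommRing R] (c : ℤ → R) (x : ℝ) : ℝ :=
  Real.log (gaussNorm (Real.exp x) c)

section MaxOfTendstoZero

variable {α : Type*} {f : α → ℝ}

theorem exists_forall_le_of_tendsto_cofinite_zero [Nonempty α] (hf0 : 0 ≤ f)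
    (hf : Tendsto f cofinite (𝓝 0)) : ∃ i, ∀ u, f u ≤ f i := by
  by_cases! hzero : ∀ u, f u = 0
  · exact ⟨Classical.arbitrary α, fun u => by rw [hzero, hzero]⟩
  obtain ⟨n, hn⟩ := hzero
  have hpos : 0 < f n := (hf0 n).lt_of_ne' hn
  have hfin : {u | f n ≤ f u}.Finite := by
    simpa using hf.eventually (gt_mem_nhds hpos)
  obtain ⟨i, hni, hi⟩ := Set.exists_max_image _ f hfin ⟨n, le_refl (f n)⟩
  refine ⟨i, fun u => ?_⟩
  by_cases hu : f n ≤ f u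
  · exact hi u hu
  · exact (not_le.mp hu).le.trans hni

theorem exists_forall_le_and_lt_of_lt_of_tendsto_cofinite_zero [LinearOrder α] (hf0 : 0 ≤ f)
    (hf : Tendsto f cofinite (𝓝 0)) {n : α} (hn : 0 < f n) :
    ∃ i, (∀ u, f u ≤ f i) ∧ ∀ u, i < u → f u < f i := by
  have : Nonempty α := ⟨n⟩
  obtain ⟨i₀, hi₀⟩ := exists_forall_le_of_tendsto_cofinite_zero hf0 hf
  have hfin : {u | f i₀ ≤ f u}.Finite := by
    simpa using hf.eventually (gt_mem_nhds (hn.trans_le (hi₀ n)))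
  obtain ⟨i, hi, hmax⟩ := Set.exists_max_image _ id hfin ⟨i₀, le_refl (f i₀)⟩
  refine ⟨i, fun u => (hi₀ u).trans hi, fun u hiu => ?_⟩
  by_contra! hu
  exact hiu.not_ge (hmax u (hi.trans hu))

end MaxOfTendstoZero

theorem IsUltrametricDist.norm_tsum_eq_of_forall_ne_norm_lt {ι E : Type*}
    [NormedAddCommGroup E] [IsUltrametricDist E] {f : ι → E} (hf : Summable f) (i : ι)
    (hlt : ∀ u ≠ i, ‖f u‖ < ‖f i‖) : ‖∑' u, f u‖ = ‖f i‖ := by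
  classical
  have : Nonempty ι := ⟨i⟩
  set tail : ι → E := fun u => if u = i then 0 else f u
  have htail : Tendsto (fun u => ‖tail u‖) cofinite (𝓝 0) := by
    refine squeeze_zero (fun u => norm_nonneg _) (fun u => ?_)
      (by simpa using hf.tendsto_cofinite_zero.norm)
    simp only [tail]; split_ifs <;> simp
  obtain ⟨u₀, hu₀⟩ :=
    exists_forall_le_of_tendsto_cofinite_zero (fun _ => norm_nonneg _) htail
  have htail_small : ∑' u, tail u = 0 ∨ ‖∑' u, tail u‖ < ‖f i‖ := by
    by_cases h : u₀ = i
    · left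
      have htail_zero (u : ι) : tail u = 0 :=
        norm_le_zero_iff.mp (by simpa [tail, h] using hu₀ u)
      simp only [htail_zero, tsum_zero]
    · right
      exact (norm_tsum_le_of_forall_le hu₀).trans_lt (by simpa [tail, h] using hlt u₀ h)
  rw [hf.tsum_eq_add_tsum_ite i]
  rcases htail_small with htail_zero | htail_lt
  · rw [htail_zero, add_zero]
  · rw [norm_add_eq_max_of_norm_ne_norm htail_lt.ne', max_eq_left htail_lt.le]

section GaussNorm

variable {R : Type*} [NormedCommRing R] {r : ℝ} {h g c : ℤ → R}

theorem gaussNorm_eq_of_forall_le {i : ℤ} (hi : ∀ u, ‖c u‖ * r ^ u ≤ ‖c i‖ * r ^ i) :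
    gaussNorm r c = ‖c i‖ * r ^ i :=
  le_antisymm (ciSup_le hi) (le_ciSup ⟨_, Set.forall_mem_range.2 hi⟩ i)

theorem gaussNorm_pos (hr : 0 < r) (hc : Tendsto (fun n => ‖c n‖ * r ^ n) cofinite (𝓝 0))
    (hc0 : c ≠ 0) : 0 < gaussNorm r c := by
  obtain ⟨n, hn⟩ := Function.ne_iff.mp hc0
  exact (mul_pos (norm_pos_iff.mpr hn) (zpow_pos hr n)).trans_le
    (le_ciSup hc.bddAbove_range_of_cofinite n)

variable [NormMulClass R]

theorem norm_mul_sub_mul_zpow (hr : r ≠ 0) (n u : ℤ) :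
    ‖h u * g (n - u)‖ * r ^ n = (‖h u‖ * r ^ u) * (‖g (n - u)‖ * r ^ (n - u)) := by
  rw [norm_mul, ← add_sub_cancel u n, add_sub_cancel_left, zpow_add₀ hr]
  ring

variable [IsUltrametricDist R]

theorem norm_lmul_mul_zpow_le (hr : 0 < r) {H G : ℝ} (hH : ∀ u, ‖h u‖ * r ^ u ≤ H)
    (hG : ∀ u, ‖g u‖ * r ^ u ≤ G) (n : ℤ) : ‖lmul h g n‖ * r ^ n ≤ H * G := by
  have hH0 : 0 ≤ H := (by positivity : 0 ≤ ‖h 0‖ * r ^ (0 : ℤ)).trans (hH 0)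
  rw [← le_div_iff₀ (zpow_pos hr n)]
  refine IsUltrametricDist.norm_tsum_le_of_forall_le fun u => ?_
  rw [le_div_iff₀ (zpow_pos hr n), norm_mul_sub_mul_zpow hr.ne']
  exact mul_le_mul (hH u) (hG _) (by positivity) hH0

theorem summable_lmul_terms [CompleteSpace R] (hr : 0 < r)
    (hh : Tendsto (fun n => ‖h n‖ * r ^ n) cofinite (𝓝 0)) {G : ℝ}
    (hG : ∀ u, ‖g u‖ * r ^ u ≤ G) (n : ℤ) : Summable fun u => h u * g (n - u) := by
  refine NonarchimedeanAddGroup.summable_of_tendsto_cofinite_zero ?_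
  rw [tendsto_zero_iff_norm_tendsto_zero]
  refine squeeze_zero (fun u => norm_nonneg _) (fun u => ?_)
    (by simpa using (hh.mul_const G).div_const (r ^ n))
  rw [le_div_iff₀ (zpow_pos hr n), norm_mul_sub_mul_zpow hr.ne']
  exact mul_le_mul_of_nonneg_left (hG _) (by positivity)

theorem norm_lmul_add_mul_zpow [CompleteSpace R] (hr : 0 < r)
    (hh : Tendsto (fun n => ‖h n‖ * r ^ n) cofinite (𝓝 0)) {i j : ℤ}
    (hi : ∀ u, ‖h u‖ * r ^ u ≤ ‖h i‖ * r ^ i)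
    (hi_lt : ∀ u, i < u → ‖h u‖ * r ^ u < ‖h i‖ * r ^ i)
    (hj : ∀ u, ‖g u‖ * r ^ u ≤ ‖g j‖ * r ^ j)
    (hj_lt : ∀ u, j < u → ‖g u‖ * r ^ u < ‖g j‖ * r ^ j)
    (hi0 : 0 < ‖h i‖ * r ^ i) (hj0 : 0 < ‖g j‖ * r ^ j) :
    ‖lmul h g (i + j)‖ * r ^ (i + j) = (‖h i‖ * r ^ i) * (‖g j‖ * r ^ j) := by
  have hterm_i :
      ‖h i * g (i + j - i)‖ * r ^ (i + j) = (‖h i‖ * r ^ i) * (‖g j‖ * r ^ j) := by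
    rw [norm_mul_sub_mul_zpow hr.ne', add_sub_cancel_left]
  rw [lmul, IsUltrametricDist.norm_tsum_eq_of_forall_ne_norm_lt (summable_lmul_terms hr hh hj _) i,
    hterm_i]
  intro u hu
  rw [← mul_lt_mul_iff_of_pos_right (zpow_pos hr (i + j)), norm_mul_sub_mul_zpow hr.ne', hterm_i]
  rcases hu.lt_or_gt with hlt | hgt
  · calc (‖h u‖ * r ^ u) * (‖g (i + j - u)‖ * r ^ (i + j - u))
        ≤ (‖h i‖ * r ^ i) * (‖g (i + j - u)‖ * r ^ (i + j - u)) :=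
          mul_le_mul_of_nonneg_right (hi u) (by positivity)
      _ < (‖h i‖ * r ^ i) * (‖g j‖ * r ^ j) :=
          mul_lt_mul_of_pos_left (hj_lt _ (by omega)) hi0
  · calc (‖h u‖ * r ^ u) * (‖g (i + j - u)‖ * r ^ (i + j - u))
        ≤ (‖h u‖ * r ^ u) * (‖g j‖ * r ^ j) :=
          mul_le_mul_of_nonneg_left (hj _) (by positivity)
      _ < (‖h i‖ * r ^ i) * (‖g j‖ * r ^ j) := mul_lt_mul_of_pos_right (hi_lt u hgt) hj0

theorem gaussNorm_lmul [CompleteSpace R] (hr : 0 < r)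
    (hh : Tendsto (fun n => ‖h n‖ * r ^ n) cofinite (𝓝 0))
    (hg : Tendsto (fun n => ‖g n‖ * r ^ n) cofinite (𝓝 0)) (hh0 : h ≠ 0) (hg0 : g ≠ 0) :
    gaussNorm r (lmul h g) = gaussNorm r h * gaussNorm r g := by
  obtain ⟨m, hm⟩ := Function.ne_iff.mp hh0
  obtain ⟨n, hn⟩ := Function.ne_iff.mp hg0
  have hm0 : 0 < ‖h m‖ * r ^ m := mul_pos (norm_pos_iff.mpr hm) (zpow_pos hr m)
  have hn0 : 0 < ‖g n‖ * r ^ n := mul_pos (norm_pos_iff.mpr hn) (zpow_pos hr n)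
  obtain ⟨i, hi, hi_lt⟩ :=
    exists_forall_le_and_lt_of_lt_of_tendsto_cofinite_zero (fun _ => by positivity) hh hm0
  obtain ⟨j, hj, hj_lt⟩ :=
    exists_forall_le_and_lt_of_lt_of_tendsto_cofinite_zero (fun _ => by positivity) hg hn0
  have hkey := norm_lmul_add_mul_zpow hr hh hi hi_lt hj hj_lt (hm0.trans_le (hi m))
    (hn0.trans_le (hj n))
  rw [gaussNorm_eq_of_forall_le hi, gaussNorm_eq_of_forall_le hj, ← hkey]
  exact gaussNorm_eq_of_forall_le fun u => (norm_lmul_mul_zpow_le hr hi hj u).trans_eq hkey.symm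

end GaussNorm

theorem newton_mul_general {R : Type*} [NormedCommRing R] [CompleteSpace R]
    (hna : IsNonarchimedean (norm : R → ℝ))
    (hmul : ∀ x y : R, ‖x * y‖ = ‖x‖ * ‖y‖)
    (a b : ℝ)
    (h g : ℤ → R) (hh : LOK a b h) (hg : LOK a b g)
    (hh0 : h ≠ 0) (hg0 : g ≠ 0) :
    ∀ x : ℝ, Real.exp x ∈ Set.Ioc a b →
      newton (lmul h g) x = newton h x + newton g x := by
  intro x hx
  have : IsUltrametricDist R := IsUltrametricDist.isUltrametricDist_of_isNonarchimedean_norm hna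
  have : NormMulClass R := ⟨hmul⟩
  have hr := Real.exp_pos x
  have hh' := cocompact_eq_cofinite ℤ ▸ hh _ (Set.Ioc_subset_Icc_self hx)
  have hg' := cocompact_eq_cofinite ℤ ▸ hg _ (Set.Ioc_subset_Icc_self hx)
  rw [newton, newton, newton, gaussNorm_lmul hr hh' hg' hh0 hg0,
    Real.log_mul (gaussNorm_pos hr hh' hh0).ne' (gaussNorm_pos hr hg' hg0).ne']

/-- For nonzero `h, g ∈ A_R[a,b]`, the Newton polygon is additive:
`π_{hg}(x) = π_h(x) + π_g(x)` for all `x ∈ (log a, log b]`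
(equivalently, `exp x ∈ (a, b]`). -/
theorem newton_mul {R : Type*} [NormedCommRing R] [IsDomain R] [CompleteSpace R]
    (hna : IsNonarchimedean (norm : R → ℝ))
    (hmul : ∀ x y : R, ‖x * y‖ = ‖x‖ * ‖y‖)
    (a b : ℝ) (ha : 0 ≤ a) (hab : a < b)
    (h g : ℤ → R) (hh : LOK a b h) (hg : LOK a b g)
    (hh0 : h ≠ 0) (hg0 : g ≠ 0) :
    ∀ x : ℝ, Real.exp x ∈ Set.Ioc a b →
      newton (lmul h g) x = newton h x + newton g x :=
  newton_mul_general hna hmul a b h g hh hg hh0 hg0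
end
end

section
/- Let R be an integral domain of positive characteristic p with a non-Archimedean absolute value, and let A_R be the ring of entire power series over R. For f ∈ 𝔽_p[t] ⊆ A_R, the following are equivalent: (i) f ≠ 0; (ii) there exist a, b, c ∈ A_R such that (ta+1)·((t-1)b+1) = f·c. -/
/-!
Over the finite field `𝔽_p` the powers of `t` in `𝔽_p[t]/(f)` must repeat, so a nonzero `f`
divides `t^i - t^(i+d+1) = (1 - t^(d+1)) · t^i`. Both factors have the required shapes
`t·a + 1` and `(t-1)·b + 1` with polynomial, hence entire, `a` and `b`. Conversely, for `f = 0`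
the factor `t·a + 1` is a unit of `R⟦t⟧`, so `(t-1)·b + 1 = 0` and `b = ∑ tⁿ`, whose coefficients
do not decay.
-/

open Filter Topology

noncomputable section

/-- The predicate describing the ring `A_R` of entire power series over `R`. -/
def EntireOK {R : Type*} [NormedCommRing R] (f : PowerSeries R) : Prop :=
  ∀ r : ℝ, 0 < r →
    Tendsto (fun n : ℕ => ‖PowerSeries.coeff n f‖ * r ^ n) atTop (𝓝 0)

/-- The image of a polynomial over `𝔽_p` in `PowerSeries R`, for `R` of
characteristic `p` (embedding `𝔽_p[t] ⊆ A_R` via the prime subring). -/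
def fpPolyPS (p : ℕ) (R : Type*) [CommRing R] [CharP R p] (f : Polynomial (ZMod p)) :
    PowerSeries R :=
  PowerSeries.mk fun n => ZMod.castHom (dvd_refl p) R (f.coeff n)

open Polynomial

theorem Polynomial.exists_dvd_X_pow_sub_X_pow {K : Type*} [Field K] [Finite K] {f : K[X]}
    (hf : f ≠ 0) : ∃ i d : ℕ, f ∣ X ^ (i + d + 1) - X ^ i := by
  have := (AdjoinRoot.powerBasis hf).finite
  have : Finite (AdjoinRoot f) := Module.finite_of_finite K
  obtain ⟨i, j, hij, h⟩ :=
    Finite.exists_ne_map_eq_of_infinite fun n : ℕ => AdjoinRoot.root f ^ n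
  wlog hlt : i < j generalizing i j
  · exact this j i hij.symm h.symm (hij.lt_or_gt.resolve_left hlt)
  obtain ⟨d, rfl⟩ := Nat.exists_eq_add_of_lt hlt
  refine ⟨i, d, AdjoinRoot.mk_eq_mk.1 ?_⟩
  simpa only [map_pow, AdjoinRoot.mk_X] using h.symm

theorem Polynomial.exists_X_mul_add_one_mul_X_sub_one_mul_add_one_eq_mul {K : Type*} [Field K]
    [Finite K] {f : K[X]} (hf : f ≠ 0) :
    ∃ a b c : K[X], (X * a + 1) * ((X - 1) * b + 1) = f * c := by
  obtain ⟨i, d, g, hg⟩ := exists_dvd_X_pow_sub_X_pow hf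
  have hgeom : (X - 1) * ∑ l ∈ Finset.range i, X ^ l + 1 = (X ^ i : K[X]) := by
    rw [mul_comm, geom_sum_mul, sub_add_cancel]
  refine ⟨-X ^ d, ∑ l ∈ Finset.range i, X ^ l, -g, ?_⟩
  rw [hgeom, mul_neg f, ← hg]
  ring

theorem entireOK_coe {R : Type*} [NormedCommRing R] (q : R[X]) :
    EntireOK (q : PowerSeries R) := by
  intro r _
  apply tendsto_const_nhds.congr'
  filter_upwards [eventually_gt_atTop q.natDegree] with n hn
  rw [coeff_coe, coeff_eq_zero_of_natDegree_lt hn, norm_zero, zero_mul]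

theorem not_entireOK_mk_one {R : Type*} [NormedCommRing R] [Nontrivial R] :
    ¬ EntireOK (PowerSeries.mk 1 : PowerSeries R) := by
  intro h
  have h1 := h 1 one_pos
  simp only [PowerSeries.coeff_mk, Pi.one_apply, one_pow, mul_one, tendsto_const_nhds_iff,
    norm_eq_zero] at h1
  exact one_ne_zero h1

theorem PowerSeries.eq_mk_one_of_X_mul_add_one_mul_X_sub_one_mul_add_one_eq_zero {S : Type*}
    [CommRing S] {a b : PowerSeries S} (h : (X * a + 1) * ((X - 1) * b + 1) = 0) :
    b = mk 1 := by
  have hunit : IsUnit (X * a + 1) := isUnit_iff_constantCoeff.2 (by simp)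
  have hb : (1 - X) * b = 1 := by linear_combination -hunit.mul_right_eq_zero.1 h
  calc b = mk 1 * (1 - X) * b := by rw [mk_one_mul_one_sub_eq_one, one_mul]
    _ = mk 1 := by rw [mul_assoc, hb, mul_one]

def fpPolyPSHom (p : ℕ) (R : Type*) [CommRing R] [CharP R p] :
    Polynomial (ZMod p) →+* PowerSeries R :=
  coeToPowerSeries.ringHom.comp (mapRingHom (ZMod.castHom (dvd_refl p) R))

theorem fpPolyPSHom_apply (p : ℕ) (R : Type*) [CommRing R] [CharP R p]
    (f : Polynomial (ZMod p)) : fpPolyPSHom p R f = fpPolyPS p R f := by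
  ext n
  simp [fpPolyPSHom, fpPolyPS, coeToPowerSeries.ringHom_apply, coeff_coe]

theorem fpPolyPS_X (p : ℕ) (R : Type*) [CommRing R] [CharP R p] :
    fpPolyPS p R X = PowerSeries.X := by
  rw [← fpPolyPSHom_apply]
  simp [fpPolyPSHom, coeToPowerSeries.ringHom_apply]

theorem entireOK_fpPolyPS (p : ℕ) (R : Type*) [NormedCommRing R] [CharP R p]
    (f : Polynomial (ZMod p)) : EntireOK (fpPolyPS p R f) := by
  rw [← fpPolyPSHom_apply]
  exact entireOK_coe _

theorem nonzero_iff_nu_general {R : Type*} [NormedCommRing R]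
    (p : ℕ) (hp : p.Prime) [CharP R p]
    (f : Polynomial (ZMod p)) :
    f ≠ 0 ↔
      ∃ a b c : PowerSeries R, EntireOK a ∧ EntireOK b ∧ EntireOK c ∧
        (PowerSeries.X * a + 1) * ((PowerSeries.X - 1) * b + 1) = fpPolyPS p R f * c := by
  have := Fact.mk hp
  have := CharP.nontrivial_of_char_ne_one (R := R) hp.ne_one
  constructor
  · intro hf
    obtain ⟨a, b, c, h⟩ := exists_X_mul_add_one_mul_X_sub_one_mul_add_one_eq_mul hf
    refine ⟨fpPolyPS p R a, fpPolyPS p R b, fpPolyPS p R c, entireOK_fpPolyPS p R a,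
      entireOK_fpPolyPS p R b, entireOK_fpPolyPS p R c, ?_⟩
    simpa only [map_mul, map_add, map_sub, map_one, fpPolyPSHom_apply, fpPolyPS_X] using
      congrArg (fpPolyPSHom p R) h
  · rintro ⟨a, b, c, -, hb, -, h⟩ rfl
    rw [← fpPolyPSHom_apply, map_zero, zero_mul] at h
    rw [PowerSeries.eq_mk_one_of_X_mul_add_one_mul_X_sub_one_mul_add_one_eq_zero h] at hb
    exact not_entireOK_mk_one hb

/-- Let `R` be an integral domain of positive characteristic `p` with a non-Archimedean
absolute value. For `f ∈ 𝔽_p[t] ⊆ A_R` the following are equivalent: (i) `f ≠ 0`;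
(ii) there are `a, b, c ∈ A_R` with `(ta + 1)((t-1)b + 1) = f·c`. -/
theorem nonzero_iff_nu {R : Type*} [NormedCommRing R] [IsDomain R]
    (p : ℕ) (hp : p.Prime) [CharP R p]
    (hna : IsNonarchimedean (norm : R → ℝ))
    (hmul : ∀ x y : R, ‖x * y‖ = ‖x‖ * ‖y‖)
    (f : Polynomial (ZMod p)) :
    f ≠ 0 ↔
      ∃ a b c : PowerSeries R, EntireOK a ∧ EntireOK b ∧ EntireOK c ∧
        (PowerSeries.X * a + 1) * ((PowerSeries.X - 1) * b + 1) = fpPolyPS p R f * c :=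
  nonzero_iff_nu_general p hp f
end
end
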